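/- arXiv:1711.02491 — 2 statements merged into one kernel-verified Lean document; each statement's English description precedes it below -/
import Mathlib

section
/- If (u, v) is a Hofstadter G pair (i.e., u and v are nonnegative integers with u = G(v)), then (v, u+v) and (v+1, u+v+1) are Hofstadter G pairs; that is, G(u+v) = v and G(u+v+1) = v+1. -/
noncomputable def goldenphi : ℝ := (1 + Real.sqrt 5) / 2

noncomputable def hofG (x : ℕ) : ℕ := (⌊((x : ℝ) + 1) / goldenphi⌋).toNat

/-!
Since `1/φ = φ - 1`, the inequality `a φ < b` is equivalent to `a + b < b φ`. Thus the defining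
inequalities `u φ < v + 1 < (u + 1) φ` of a pair `u = G(v)` (strict on the left because `φ` is
irrational) become `u + v + 1 < (v + 1) φ < u + v + 2`, which pin down both `G(u + v)` and
`G(u + v + 1)`.
-/

open Real goldenRatio

lemma goldenphi_eq_goldenRatio : goldenphi = φ := rfl

lemma mul_goldenRatio_lt_iff {a b : ℝ} : a * φ < b ↔ a + b < b * φ := by
  have key : (b - a * φ) * (φ - 1) = b * φ - (a + b) := by
    linear_combination (-a) * goldenRatio_sq
  rw [← sub_pos, ← sub_pos (a := b * φ), ← key,
    mul_pos_iff_of_pos_right (sub_pos.2 one_lt_goldenRatio)]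

lemma lt_mul_goldenRatio_iff {a b : ℝ} : b < a * φ ↔ b * φ < a + b := by
  have key : (a * φ - b) * (φ - 1) = a + b - b * φ := by
    linear_combination a * goldenRatio_sq
  rw [← sub_pos, ← sub_pos (a := a + b), ← key,
    mul_pos_iff_of_pos_right (sub_pos.2 one_lt_goldenRatio)]

lemma natCast_mul_goldenRatio_ne_natCast {n : ℕ} (hn : n ≠ 0) (m : ℕ) : (n : ℝ) * φ ≠ m := by
  rw [mul_comm]
  exact (goldenRatio_irrational.mul_natCast hn).ne_nat m

lemma hofG_eq_iff (x n : ℕ) :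
    hofG x = n ↔ (n : ℝ) * φ ≤ x + 1 ∧ (x : ℝ) + 1 < (n + 1) * φ := by
  have hx : (0 : ℝ) ≤ ((x : ℝ) + 1) / φ := by positivity
  rw [hofG, goldenphi_eq_goldenRatio, Int.floor_toNat, Nat.floor_eq_iff hx,
    le_div_iff₀ goldenRatio_pos, div_lt_iff₀ goldenRatio_pos]

lemma natCast_mul_goldenRatio_lt_of_hofG_eq {u v : ℕ} (h : hofG v = u) :
    (u : ℝ) * φ < v + 1 := by
  have hle := ((hofG_eq_iff v u).mp h).1
  rcases Nat.eq_zero_or_pos u with rfl | hu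
  · simp only [Nat.cast_zero, zero_mul]
    positivity
  · exact hle.lt_of_ne (by exact_mod_cast natCast_mul_goldenRatio_ne_natCast hu.ne' (v + 1))

theorem stmt_2 (u v : ℕ) (h : u = hofG v) :
    hofG (u + v) = v ∧ hofG (u + v + 1) = v + 1 := by
  have hlower : (u : ℝ) + (v + 1) < (v + 1) * φ :=
    mul_goldenRatio_lt_iff.mp (natCast_mul_goldenRatio_lt_of_hofG_eq h.symm)
  have hupper : ((v : ℝ) + 1) * φ < (u + 1) + (v + 1) :=
    lt_mul_goldenRatio_iff.mp ((hofG_eq_iff v u).mp h.symm).2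
  have hφ := one_lt_goldenRatio
  refine ⟨(hofG_eq_iff _ _).mpr ?_, (hofG_eq_iff _ _).mpr ?_⟩ <;> push_cast <;>
    constructor <;> linarith
end

section
/- Let β = β_1…β_L be a bit string (each β_i ∈ {0,1}), let v = Σ_{i=1}^L β_i F_{i+1}, and let u = G(v). Then u + v = Σ_{i=1}^L β_i F_{i+2} (the Fibonacci sum of the bit string ⟨0⟩‖β) and u + v + 1 = F_2 + Σ_{i=1}^L β_i F_{i+2} (the Fibonacci sum of ⟨1⟩‖β). -/
noncomputable def psiconj : ℝ := (1 - Real.sqrt 5) / 2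

lemma sqrt5_sq : Real.sqrt 5 ^ 2 = 5 := Real.sq_sqrt (by norm_num)

lemma sqrt5_gt : 2 < Real.sqrt 5 := by
  nlinarith [Real.sqrt_nonneg 5, sqrt5_sq]

lemma sqrt5_lt : Real.sqrt 5 < 3 := by
  nlinarith [Real.sqrt_nonneg 5, sqrt5_sq]

lemma psi_neg : psiconj < 0 := by unfold psiconj; nlinarith [sqrt5_gt]

lemma psi_gt : -1 < psiconj := by unfold psiconj; nlinarith [sqrt5_lt]

lemma psi_sq : psiconj ^ 2 = psiconj + 1 := by unfold psiconj; nlinarith [sqrt5_sq]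

lemma phi_sq : goldenphi ^ 2 = goldenphi + 1 := by unfold goldenphi; nlinarith [sqrt5_sq]

lemma phi_add_psi : goldenphi + psiconj = 1 := by unfold goldenphi psiconj; ring

lemma phi_pos : 0 < goldenphi := by unfold goldenphi; nlinarith [sqrt5_gt]

lemma sum_psi_bounds : ∀ (L : ℕ) (β : ℕ → ℕ), (∀ i, β i = 0 ∨ β i = 1) →
    -1 < ∑ i ∈ Finset.range L, (β i : ℝ) * psiconj ^ (i + 1) ∧
    ∑ i ∈ Finset.range L, (β i : ℝ) * psiconj ^ (i + 1) < -psiconj := by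
  intro L
  induction L with
  | zero =>
    intro β _
    simp only [Finset.range_zero, Finset.sum_empty]
    refine ⟨by norm_num, by simpa using psi_neg⟩
  | succ n ih =>
    intro β hβ
    have key : ∑ i ∈ Finset.range (n + 1), (β i : ℝ) * psiconj ^ (i + 1)
        = psiconj * (∑ i ∈ Finset.range n, (β (i + 1) : ℝ) * psiconj ^ (i + 1))
          + (β 0 : ℝ) * psiconj := by
      rw [Finset.sum_range_succ' (fun i => (β i : ℝ) * psiconj ^ (i + 1)) n,
        Finset.mul_sum]
      congr 1
      · exact Finset.sum_congr rfl (fun i _ => by ring)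
      · ring
    obtain ⟨hg1, hg2⟩ := ih (fun i => β (i + 1)) (fun i => hβ (i + 1))
    rw [key]
    rcases hβ 0 with h0 | h0 <;> rw [h0] <;> push_cast <;>
      constructor <;> nlinarith [psi_neg, psi_sq, psi_gt, hg1, hg2]

lemma fib_phi : ∀ i : ℕ, (Nat.fib (i + 1) : ℝ) = goldenphi * Nat.fib i + psiconj ^ i := by
  intro i
  induction i with
  | zero => simp
  | succ n ih =>
    rw [Nat.fib_add_two]
    push_cast
    rw [ih, pow_succ]
    linear_combination (-(Nat.fib n : ℝ)) * phi_sq + (-(psiconj ^ n)) * phi_add_psi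

theorem stmt_4 (L : ℕ) (β : ℕ → ℕ) (hbit : ∀ i, β i = 0 ∨ β i = 1)
    (v u : ℕ) (hv : v = ∑ i ∈ Finset.Icc 1 L, β i * Nat.fib (i + 1))
    (hu : u = hofG v) :
    u + v = ∑ i ∈ Finset.Icc 1 L, β i * Nat.fib (i + 2) ∧
    u + v + 1 = Nat.fib 2 + ∑ i ∈ Finset.Icc 1 L, β i * Nat.fib (i + 2) := by
  -- rewrite Icc sums as range sums with shifted index
  have hIcc : ∀ f : ℕ → ℕ, ∑ i ∈ Finset.Icc 1 L, f i = ∑ i ∈ Finset.range L, f (i + 1) := by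
    intro f
    rw [show Finset.Icc 1 L = Finset.Ico 1 (L + 1) from (Finset.Ico_add_one_right_eq_Icc 1 L).symm,
      Finset.sum_Ico_eq_sum_range]
    simp [Nat.add_comm]
  set s : ℕ := ∑ i ∈ Finset.range L, β (i + 1) * Nat.fib (i + 1) with hs
  set c : ℝ := ∑ i ∈ Finset.range L, (β (i + 1) : ℝ) * psiconj ^ (i + 1) with hc
  have hvr : (v : ℝ) = goldenphi * s + c := by
    rw [hv, hIcc, hs]
    push_cast
    rw [hc, Finset.mul_sum, ← Finset.sum_add_distrib]
    apply Finset.sum_congr rfl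
    intro i _
    rw [fib_phi (i + 1)]
    ring
  obtain ⟨hc1, hc2⟩ := sum_psi_bounds L (fun i => β (i + 1)) (fun i => hbit (i + 1))
  rw [← hc] at hc1 hc2
  -- compute u = s
  have hus : u = s := by
    rw [hu]
    unfold hofG
    have hfl : ⌊((v : ℝ) + 1) / goldenphi⌋ = (s : ℤ) := by
      rw [Int.floor_eq_iff, hvr]
      constructor
      · rw [le_div_iff₀ phi_pos]
        push_cast
        nlinarith [phi_pos]
      · rw [div_lt_iff₀ phi_pos]
        push_cast
        have hphi1 : -psiconj = goldenphi - 1 := by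
          have := phi_add_psi; linarith
        nlinarith [phi_pos]
    rw [hfl]
    simp
  have hsum : s + v = ∑ i ∈ Finset.Icc 1 L, β i * Nat.fib (i + 2) := by
    rw [hv, hIcc (fun i => β i * Nat.fib (i + 1)),
      hIcc (fun i => β i * Nat.fib (i + 2)), hs, ← Finset.sum_add_distrib]
    apply Finset.sum_congr rfl
    intro i _
    rw [Nat.fib_add_two (n := i + 1), Nat.mul_add]
  refine ⟨by rw [hus]; exact hsum, ?_⟩
  rw [hus, Nat.fib_two]
  omega
end
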